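/- Let r ≥ 2 and let ℓ ∈ (0,∞)^r satisfy F̄_r(ℓ) = 0 and ℓʳ ≥ log 3. Then min{ℓⁱ : i ∈ [r-1]} ≤ log(4r - 5). -/

import Mathlib

/-- `F̄_r(ℓ) = ∑_{S⊆[r]} (1-2|S|) e^{-ℓ^S}`. -/
noncomputable def Fbar (r : ℕ) (ℓ : Fin r → ℝ) : ℝ :=
  ∑ S : Finset (Fin r), (1 - 2 * (S.card : ℝ)) * Real.exp (-(∑ i ∈ S, ℓ i))

/-!
With `xᵢ = e^{-ℓᵢ}`, expanding over subsets gives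
`F̄_r(ℓ) = ∏ᵢ (1 + xᵢ) · (1 - 2 ∑ᵢ xᵢ / (1 + xᵢ))`, so `F̄_r(ℓ) = 0` means
`∑ᵢ 1 / (e^{ℓᵢ} + 1) = 1/2`. If `ℓʳ ≥ log 3` the last term is at most `1/4`, so one of the
other `r - 1` terms is at least `1 / (4(r - 1))`, i.e. `e^{ℓⁱ} ≤ 4r - 5`.
-/

open Finset Real

theorem sum_powerset_one_sub_two_card_mul_prod {ι : Type*} [DecidableEq ι] (s : Finset ι)
    (x : ι → ℝ) (hx : ∀ i ∈ s, 1 + x i ≠ 0) :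
    ∑ S ∈ s.powerset, (1 - 2 * (#S : ℝ)) * ∏ i ∈ S, x i
      = (∏ i ∈ s, (1 + x i)) * (1 - 2 * ∑ i ∈ s, x i / (1 + x i)) := by
  induction s using Finset.induction_on with
  | empty => simp
  | @insert a s ha ih =>
    have hxa := hx a (mem_insert_self a s)
    have hins : ∀ t ∈ s.powerset, (1 - 2 * (#(insert a t) : ℝ)) * ∏ i ∈ insert a t, x i
        = x a * ((1 - 2 * (#t : ℝ)) * ∏ i ∈ t, x i) - 2 * x a * ∏ i ∈ t, x i := by
      intro t ht
      have hat : a ∉ t := fun h => ha (mem_powerset.mp ht h)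
      rw [prod_insert hat, card_insert_of_notMem hat]
      push_cast
      ring
    rw [sum_powerset_insert ha, sum_congr rfl hins, sum_sub_distrib, ← mul_sum, ← mul_sum,
      ← prod_one_add, ih fun i hi => hx i (mem_insert_of_mem hi), prod_insert ha, sum_insert ha]
    field_simp
    ring

theorem Fbar_eq (r : ℕ) (ℓ : Fin r → ℝ) :
    Fbar r ℓ = (∏ i, (1 + exp (-ℓ i))) * (1 - 2 * ∑ i, (exp (ℓ i) + 1)⁻¹) := by
  have hx : ∀ i ∈ univ, 1 + exp (-ℓ i) ≠ 0 := fun i _ => by positivity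
  have hterm : ∀ i ∈ univ, exp (-ℓ i) / (1 + exp (-ℓ i)) = (exp (ℓ i) + 1)⁻¹ := fun i _ => by
    rw [exp_neg]
    field_simp
  rw [← sum_congr rfl hterm, ← sum_powerset_one_sub_two_card_mul_prod _ _ hx, powerset_univ, Fbar]
  simp only [← exp_sum, sum_neg_distrib]

theorem sum_inv_exp_add_one_eq_half {r : ℕ} {ℓ : Fin r → ℝ} (hF : Fbar r ℓ = 0) :
    ∑ i, (exp (ℓ i) + 1)⁻¹ = 1 / 2 := by
  have hprod : ∏ i, (1 + exp (-ℓ i)) ≠ 0 := by positivity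
  rw [Fbar_eq, mul_eq_zero, or_iff_right hprod] at hF
  linarith

theorem inv_exp_add_one_le_quarter {t : ℝ} (ht : log 3 ≤ t) : (exp t + 1)⁻¹ ≤ 1 / 4 := by
  have h3 : 3 ≤ exp t := by simpa [exp_log] using exp_le_exp.mpr ht
  rw [inv_le_comm₀ (by positivity) (by norm_num)]
  linarith

theorem exists_le_log_of_quarter_le_sum {ι : Type*} {s : Finset ι} (hs : s.Nonempty)
    {f : ι → ℝ} (hsum : 1 / 4 ≤ ∑ i ∈ s, (exp (f i) + 1)⁻¹) :
    ∃ i ∈ s, f i ≤ log (4 * #s - 1) := by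
  have hcard : (1 : ℝ) ≤ #s := by exact_mod_cast hs.card_pos
  have hconst : ∑ _i ∈ s, (4 * (#s : ℝ))⁻¹ = 1 / 4 := by
    rw [sum_const, nsmul_eq_mul]
    field_simp
  obtain ⟨i, hi, hle⟩ := exists_le_of_sum_le hs (hconst.trans_le hsum)
  refine ⟨i, hi, (le_log_iff_exp_le (by linarith)).mpr ?_⟩
  rw [inv_le_inv₀ (by positivity) (by positivity)] at hle
  linarith

/-- If `F̄_r(ℓ) = 0` with positive lengths and the last edge satisfies
`ℓʳ ≥ log 3`, then some edge among the first `r - 1` has length at most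
`log(4r - 5)`. -/
theorem min_edge_bound (r : ℕ) (hr : 2 ≤ r) (ℓ : Fin r → ℝ)
    (hF : Fbar r ℓ = 0)
    (hlast : Real.log 3 ≤ ℓ ⟨r - 1, by omega⟩) :
    ∃ i : Fin r, (i : ℕ) < r - 1 ∧ ℓ i ≤ Real.log (4 * r - 5) := by
  obtain ⟨n, rfl⟩ : ∃ n, r = n + 1 := ⟨r - 1, by omega⟩
  have hsum := sum_inv_exp_add_one_eq_half hF
  rw [Fin.sum_univ_castSucc] at hsum
  have hrest : 1 / 4 ≤ ∑ i : Fin n, (exp (ℓ i.castSucc) + 1)⁻¹ := by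
    linarith [inv_exp_add_one_le_quarter (t := ℓ (Fin.last n)) hlast]
  have hn : (univ : Finset (Fin n)).Nonempty := univ_nonempty_iff.mpr ⟨⟨0, by omega⟩⟩
  obtain ⟨i, -, hi⟩ := exists_le_log_of_quarter_le_sum hn hrest
  refine ⟨i.castSucc, by simp, ?_⟩
  convert hi using 2
  simp only [card_univ, Fintype.card_fin]
  push_cast
  ring
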